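/- arXiv:2003.02580 — 3 statements merged into one kernel-verified Lean document; each statement's English description precedes it below -/
import Mathlib

section
/- For all ζ, ζ⁰ ∈ ℝ^d, setting r_i = y_i − ⟨u_i, ζ⁰⟩ and w_i = (2/θ) ω_i exp(−r_i²/θ), the exponential squared loss objective satisfies the global quadratic minorization Q_θ(ζ) ≥ Q_θ(ζ⁰) + Σ_{i=1}^n w_i r_i ⟨u_i, ζ − ζ⁰⟩ − (1/2) Σ_{i=1}^n w_i ⟨u_i, ζ − ζ⁰⟩², provided ω_i ≥ 0 for all i. -/
open Real Finset

/-- The exponential squared loss objective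
`Q_θ(ζ) = ∑ i, ω_i exp(-(y_i - ⟨u_i, ζ⟩)² / θ)`. -/
noncomputable def expSqLoss (n d : ℕ) (ω y : Fin n → ℝ) (u : Fin n → Fin d → ℝ)
    (θ : ℝ) (ζ : Fin d → ℝ) : ℝ :=
  ∑ i, ω i * Real.exp (-(y i - ∑ j, u i j * ζ j) ^ 2 / θ)

/-- global quadratic minorization of the exponential squared loss:
with `r_i = y_i - ⟨u_i, ζ⁰⟩` and `w_i = (2/θ) ω_i exp(-r_i²/θ)`,
`Q_θ(ζ) ≥ Q_θ(ζ⁰) + ∑ i w_i r_i ⟨u_i, ζ - ζ⁰⟩ - (1/2) ∑ i w_i ⟨u_i, ζ - ζ⁰⟩²`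
provided all `ω_i ≥ 0`. -/
theorem expSqLoss_quadratic_minorization (n d : ℕ) (ω y : Fin n → ℝ)
    (u : Fin n → Fin d → ℝ) (θ : ℝ) (hθ : 0 < θ) (hω : ∀ i, 0 ≤ ω i)
    (ζ ζ₀ : Fin d → ℝ) (r w : Fin n → ℝ)
    (hr : ∀ i, r i = y i - ∑ j, u i j * ζ₀ j)
    (hw : ∀ i, w i = (2 / θ) * ω i * Real.exp (-(r i) ^ 2 / θ)) :
    expSqLoss n d ω y u θ ζ ≥
      expSqLoss n d ω y u θ ζ₀
        + ∑ i, w i * r i * (∑ j, u i j * (ζ j - ζ₀ j))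
        - (1 / 2) * ∑ i, w i * (∑ j, u i j * (ζ j - ζ₀ j)) ^ 2 := by
  have hθ' : θ ≠ 0 := ne_of_gt hθ
  unfold expSqLoss
  rw [ge_iff_le, mul_sum, ← sum_add_distrib, ← sum_sub_distrib]
  apply Finset.sum_le_sum
  intro i _
  set a := r i with ha
  set t := ∑ j, u i j * (ζ j - ζ₀ j) with ht
  have hyt : y i - ∑ j, u i j * ζ j = a - t := by
    rw [ha, hr i, ht]
    simp only [mul_sub]
    rw [Finset.sum_sub_distrib]
    ring
  have hc : (0:ℝ) < Real.exp (-a ^ 2 / θ) := Real.exp_pos _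
  have hsplit : Real.exp (-(a - t) ^ 2 / θ)
      = Real.exp (-a ^ 2 / θ) * Real.exp ((2 * a * t - t ^ 2) / θ) := by
    rw [← Real.exp_add]
    congr 1
    field_simp
    ring
  have hlin : 1 + (2 * a * t - t ^ 2) / θ ≤ Real.exp ((2 * a * t - t ^ 2) / θ) := by
    have := Real.add_one_le_exp ((2 * a * t - t ^ 2) / θ)
    linarith
  rw [show (y i - ∑ j, u i j * ζ₀ j) = a from (hr i).symm]
  calc ω i * Real.exp (-a ^ 2 / θ) + w i * a * t - 1 / 2 * (w i * t ^ 2)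
      = ω i * (Real.exp (-a ^ 2 / θ) * (1 + (2 * a * t - t ^ 2) / θ)) := by
        rw [hw i, ← ha]; field_simp; ring
    _ ≤ ω i * (Real.exp (-a ^ 2 / θ) * Real.exp ((2 * a * t - t ^ 2) / θ)) := by
        apply mul_le_mul_of_nonneg_left _ (hω i)
        exact mul_le_mul_of_nonneg_left hlin hc.le
    _ = ω i * Real.exp (-(y i - ∑ j, u i j * ζ j) ^ 2 / θ) := by
        rw [hyt, hsplit]
end

section
/- Suppose ω_i ≥ 0 for all i. For every ζ, ν ∈ ℝ^d, the second derivative at t = 0 of the map t ↦ Q_θ(ζ + tν) is bounded below by −Σ_{i=1}^n (2/θ) ω_i exp(−(y_i − ⟨u_i, ζ⟩)²/θ) ⟨u_i, ν⟩²; that is, the Hessian of Q_θ at ζ satisfies Hess Q_θ(ζ)(ν, ν) ≥ −ν^⊤ U^⊤ W(ζ) U ν, where W(ζ) is the diagonal matrix with entries W_{ii} = (2/θ) ω_i exp(−(y_i − ⟨u_i, ζ⟩)²/θ) and U has rows u_i^⊤. -/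
/-!
With `φ x = exp (-x ^ 2 / θ)` one has `φ'' = ((2 x / θ) ^ 2 - 2 / θ) φ ≥ -(2 / θ) φ`. Along the
line `ζ + t ν` the `i`-th summand of `Q_θ` is `ω_i φ` composed with an affine map of slope
`-⟨u_i, ν⟩`, so its second derivative is `ω_i ⟨u_i, ν⟩² φ''`, and summing the pointwise bound
over `i` with the nonnegative weights `ω_i` gives the claim.
-/

open Real Finset

theorem iteratedDeriv_comp_affine {𝕜 : Type*} [NontriviallyNormedField 𝕜] {n : ℕ}
    {f : 𝕜 → 𝕜} (hf : ContDiff 𝕜 n f) (a b t : 𝕜) :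
    iteratedDeriv n (fun s => f (a + b * s)) t = b ^ n * iteratedDeriv n f (a + b * t) := by
  have hshift : ContDiff 𝕜 n (fun z => f (a + z)) := hf.comp (contDiff_const.add contDiff_id)
  rw [iteratedDeriv_comp_const_mul hshift b, iteratedDeriv_comp_const_add]

noncomputable def expSqKernel (θ x : ℝ) : ℝ := exp (-x ^ 2 / θ)

@[fun_prop]
theorem contDiff_expSqKernel (θ : ℝ) {n : WithTop ℕ∞} : ContDiff ℝ n (expSqKernel θ) := by
  unfold expSqKernel
  fun_prop

theorem hasDerivAt_expSqKernel (θ x : ℝ) :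
    HasDerivAt (expSqKernel θ) (-(2 * x / θ) * expSqKernel θ x) x := by
  unfold expSqKernel
  convert ((hasDerivAt_pow 2 x).fun_neg.div_const θ).exp using 1
  norm_num
  ring

theorem deriv_expSqKernel (θ : ℝ) :
    deriv (expSqKernel θ) = fun x => -(2 * x / θ) * expSqKernel θ x :=
  funext fun x => (hasDerivAt_expSqKernel θ x).deriv

theorem iteratedDeriv_two_expSqKernel (θ x : ℝ) :
    iteratedDeriv 2 (expSqKernel θ) x = ((2 * x / θ) ^ 2 - 2 / θ) * expSqKernel θ x := by
  have hlin : HasDerivAt (fun x => -(2 * x / θ)) (-(2 / θ)) x := by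
    simpa using (((hasDerivAt_id x).const_mul 2).div_const θ).fun_neg
  rw [iteratedDeriv_succ, iteratedDeriv_one, deriv_expSqKernel,
    (hlin.fun_mul (hasDerivAt_expSqKernel θ x)).deriv]
  ring

theorem neg_two_div_mul_le_iteratedDeriv_two_expSqKernel (θ x : ℝ) :
    -(2 / θ) * expSqKernel θ x ≤ iteratedDeriv 2 (expSqKernel θ) x := by
  rw [iteratedDeriv_two_expSqKernel, expSqKernel]
  linear_combination mul_nonneg (sq_nonneg (2 * x / θ)) (exp_pos (-x ^ 2 / θ)).le

theorem expSqLoss_add_smul (n d : ℕ) (ω y : Fin n → ℝ) (u : Fin n → Fin d → ℝ)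
    (θ : ℝ) (ζ ν : Fin d → ℝ) (t : ℝ) :
    expSqLoss n d ω y u θ (fun j => ζ j + t * ν j) =
      ∑ i, ω i * expSqKernel θ
        ((y i - ∑ j, u i j * ζ j) + -(∑ j, u i j * ν j) * t) := by
  unfold expSqLoss expSqKernel
  congr! 5 with i
  simp only [mul_add, sum_add_distrib, mul_left_comm _ t, ← mul_sum]
  ring

theorem iteratedDeriv_two_expSqLoss_add_smul (n d : ℕ) (ω y : Fin n → ℝ)
    (u : Fin n → Fin d → ℝ) (θ : ℝ) (ζ ν : Fin d → ℝ) :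
    iteratedDeriv 2 (fun t : ℝ => expSqLoss n d ω y u θ (fun j => ζ j + t * ν j)) 0 =
      ∑ i, ω i * ((∑ j, u i j * ν j) ^ 2 *
        iteratedDeriv 2 (expSqKernel θ) (y i - ∑ j, u i j * ζ j)) := by
  simp_rw [expSqLoss_add_smul]
  rw [iteratedDeriv_fun_sum fun i _ => by fun_prop]
  refine sum_congr rfl fun i _ => ?_
  rw [iteratedDeriv_const_mul_field, iteratedDeriv_comp_affine (contDiff_expSqKernel θ),
    neg_sq, mul_zero, add_zero]

theorem expSqLoss_hessian_lower_bound_general (n d : ℕ) (ω y : Fin n → ℝ)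
    (u : Fin n → Fin d → ℝ) (θ : ℝ) (hω : ∀ i, 0 ≤ ω i)
    (ζ ν : Fin d → ℝ) :
    iteratedDeriv 2 (fun t : ℝ => expSqLoss n d ω y u θ (fun j => ζ j + t * ν j)) 0 ≥
      -∑ i, (2 / θ) * ω i * Real.exp (-(y i - ∑ j, u i j * ζ j) ^ 2 / θ) *
        (∑ j, u i j * ν j) ^ 2 := by
  rw [iteratedDeriv_two_expSqLoss_add_smul, ge_iff_le, ← sum_neg_distrib]
  refine sum_le_sum fun i _ => ?_
  have hbound := mul_le_mul_of_nonneg_left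
    (neg_two_div_mul_le_iteratedDeriv_two_expSqKernel θ (y i - ∑ j, u i j * ζ j))
    (mul_nonneg (hω i) (sq_nonneg (∑ j, u i j * ν j)))
  rw [expSqKernel] at hbound
  linear_combination hbound

/-- the second derivative at `t = 0` of `t ↦ Q_θ(ζ + tν)` is bounded
below by `-∑ i (2/θ) ω_i exp(-(y_i - ⟨u_i,ζ⟩)²/θ) ⟨u_i, ν⟩²`, i.e.
`Hess Q_θ(ζ)(ν, ν) ≥ -νᵀ Uᵀ W(ζ) U ν`, provided all `ω_i ≥ 0`. -/
theorem expSqLoss_hessian_lower_bound (n d : ℕ) (ω y : Fin n → ℝ)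
    (u : Fin n → Fin d → ℝ) (θ : ℝ) (hθ : 0 < θ) (hω : ∀ i, 0 ≤ ω i)
    (ζ ν : Fin d → ℝ) :
    iteratedDeriv 2 (fun t : ℝ => expSqLoss n d ω y u θ (fun j => ζ j + t * ν j)) 0 ≥
      -∑ i, (2 / θ) * ω i * Real.exp (-(y i - ∑ j, u i j * ζ j) ^ 2 / θ) *
        (∑ j, u i j * ν j) ^ 2 :=
  expSqLoss_hessian_lower_bound_general n d ω y u θ hω ζ ν
end

section
/- For λ > 0, s > 0 and all t, t₀ ≥ 0, the tangent-line majorization ρ(t; λ, s) ≤ ρ(t₀; λ, s) + (λ − t₀/s)_+ · (t − t₀) holds. -/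
open Real

/-- The minimax concave penalty (MCP):
`ρ(t; λ, s) = λ ∫_0^{|t|} (1 - x/(λs))₊ dx`. -/
noncomputable def mcp (lam s t : ℝ) : ℝ :=
  lam * ∫ x in (0 : ℝ)..|t|, max (1 - x / (lam * s)) 0

/-- tangent-line majorization of the MCP: for `λ > 0`, `s > 0` and all
`t, t₀ ≥ 0`, `ρ(t; λ, s) ≤ ρ(t₀; λ, s) + (λ - t₀/s)₊ (t - t₀)`. -/
theorem mcp_tangent_majorization (lam s : ℝ) (hlam : 0 < lam) (hs : 0 < s)
    (t t₀ : ℝ) (ht : 0 ≤ t) (ht₀ : 0 ≤ t₀) :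
    mcp lam s t ≤ mcp lam s t₀ + max (lam - t₀ / s) 0 * (t - t₀) := by
  set g : ℝ → ℝ := fun x => max (1 - x / (lam * s)) 0 with hg
  have hc : Continuous g := (continuous_const.sub (continuous_id.div_const _)).max continuous_const
  have hint : ∀ a b : ℝ, IntervalIntegrable g MeasureTheory.volume a b :=
    fun a b => hc.intervalIntegrable a b
  have hls : 0 < lam * s := mul_pos hlam hs
  have hsplit : mcp lam s t - mcp lam s t₀ = lam * ∫ x in t₀..t, g x := by
    unfold mcp
    rw [abs_of_nonneg ht, abs_of_nonneg ht₀, ← mul_sub,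
      intervalIntegral.integral_interval_sub_left (hint 0 t) (hint 0 t₀)]
  have hmono : ∀ a b : ℝ, a ≤ b → g b ≤ g a := by
    intro a b hab
    apply max_le_max _ le_rfl
    gcongr
  have key : ∫ x in t₀..t, g x ≤ g t₀ * (t - t₀) := by
    rcases le_total t₀ t with h | h
    · have hb := intervalIntegral.integral_mono_on h (hint t₀ t)
        (intervalIntegrable_const (c := g t₀)) (fun x hx => hmono t₀ x hx.1)
      simpa [smul_eq_mul, mul_comm] using hb
    · have hflip : ∫ x in t₀..t, g x = -∫ x in t..t₀, g x :=
        (intervalIntegral.integral_symm t t₀)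
      have hb := intervalIntegral.integral_mono_on h
        (intervalIntegrable_const (c := g t₀)) (hint t t₀) (fun x hx => hmono x t₀ hx.2)
      rw [intervalIntegral.integral_const, smul_eq_mul] at hb
      nlinarith [hb]
  have hlamg : lam * g t₀ = max (lam - t₀ / s) 0 := by
    rw [hg]
    simp only
    rw [mul_max_of_nonneg _ _ hlam.le, mul_zero]
    congr 1
    field_simp
  have : lam * ∫ x in t₀..t, g x ≤ max (lam - t₀ / s) 0 * (t - t₀) := by
    calc lam * ∫ x in t₀..t, g x ≤ lam * (g t₀ * (t - t₀)) := by
          exact mul_le_mul_of_nonneg_left key hlam.le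
      _ = max (lam - t₀ / s) 0 * (t - t₀) := by rw [← mul_assoc, hlamg]
  linarith [hsplit, this]
end
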